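/- arXiv:2301.11368 — 5 statements merged into one kernel-verified Lean document; each statement's English description precedes it below -/
import Mathlib

section
/- If p_s and p_q are Bernoulli random variables (functions of s and q respectively) that are conditionally independent given the true label y, and each model is no worse than random guessing (P(p_s=1|y=1) ≥ P(p_s=1|y=0) and P(p_q=1|y=1) ≥ P(p_q=1|y=0)), then P(p_s=1|y=0) ≤ P(p_s=1|p_q=0). -/
open Finset

/-- Expectation of `f` under weights `w` on a finite sample space. -/
noncomputable def ev {Ω : Type*} [Fintype Ω] (w f : Ω → ℝ) : ℝ := ∑ x, w x * f x

/-- If `p_s` and `p_q` are Bernoulli (functions of s, q resp.) that are conditionally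
independent given the binary label `y`, and each is no worse than random guessing, then
`P(p_s=1 | y=0) ≤ P(p_s=1 | p_q=0)`. Probabilities of binary events are expressed via
expectations of indicator products. -/
theorem stmt0 {Ω : Type*} [Fintype Ω] (w y ps pq : Ω → ℝ)
    (hw : ∀ x, 0 ≤ w x) (hw1 : ∑ x, w x = 1)
    (hy : ∀ x, y x = 0 ∨ y x = 1)
    (hps : ∀ x, ps x = 0 ∨ ps x = 1)
    (hpq : ∀ x, pq x = 0 ∨ pq x = 1)
    -- conditional independence of p_s and p_q given y = 1 and given y = 0
    (hci1 : ev w (fun x => ps x * pq x * y x) * ev w y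
      = ev w (fun x => ps x * y x) * ev w (fun x => pq x * y x))
    (hci0 : ev w (fun x => ps x * pq x * (1 - y x)) * ev w (fun x => 1 - y x)
      = ev w (fun x => ps x * (1 - y x)) * ev w (fun x => pq x * (1 - y x)))
    -- no worse than random: P(p_s=1|y=1) ≥ P(p_s=1|y=0), cross-multiplied
    (hrs : ev w (fun x => ps x * (1 - y x)) * ev w y
      ≤ ev w (fun x => ps x * y x) * ev w (fun x => 1 - y x))
    (hrq : ev w (fun x => pq x * (1 - y x)) * ev w y
      ≤ ev w (fun x => pq x * y x) * ev w (fun x => 1 - y x))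
    -- P(p_q = 0) > 0 and P(y = 0) > 0
    (hq0 : 0 < ev w (fun x => 1 - pq x))
    (hy0 : 0 < ev w (fun x => 1 - y x)) :
    ev w (fun x => ps x * (1 - y x)) / ev w (fun x => 1 - y x)
      ≤ ev w (fun x => ps x * (1 - pq x)) / ev w (fun x => 1 - pq x) := by
  set A := ev w (fun x => ps x * y x) with hA
  set B := ev w (fun x => ps x * (1 - y x)) with hB
  set C := ev w (fun x => pq x * y x) with hC
  set D := ev w (fun x => pq x * (1 - y x)) with hD
  set Y1 := ev w y with hY1
  set Y0 := ev w (fun x => 1 - y x) with hY0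
  set E1 := ev w (fun x => ps x * pq x * y x) with hE1
  set E0 := ev w (fun x => ps x * pq x * (1 - y x)) with hE0
  set Q := ev w (fun x => 1 - pq x) with hQ
  set S := ev w (fun x => ps x * (1 - pq x)) with hS
  -- identities
  have hsum : Y1 + Y0 = 1 := by
    have h : Y0 = (∑ x, w x) - Y1 := by
      rw [hY0, hY1, ev, ev, ← Finset.sum_sub_distrib]
      exact Finset.sum_congr rfl fun x _ => by ring
    rw [h, hw1]; ring
  have hQeq : Q = 1 - C - D := by
    have h : Q = (∑ x, w x) - C - D := by
      rw [hQ, hC, hD, ev, ev, ev, ← Finset.sum_sub_distrib, ← Finset.sum_sub_distrib]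
      exact Finset.sum_congr rfl fun x _ => by ring
    rw [h, hw1]
  have hSeq : S = A + B - E1 - E0 := by
    rw [hS, hA, hB, hE1, hE0, ev, ev, ev, ev, ev]
    rw [← Finset.sum_add_distrib, ← Finset.sum_sub_distrib, ← Finset.sum_sub_distrib]
    exact Finset.sum_congr rfl fun x _ => by ring
  -- nonnegativity facts
  have key : ∀ f : Ω → ℝ, (∀ x, 0 ≤ f x) → 0 ≤ ev w f := fun f hf =>
    Finset.sum_nonneg fun x _ => mul_nonneg (hw x) (hf x)
  have hBnn : 0 ≤ B := key _ fun x => by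
    rcases hps x with h | h <;> rcases hy x with h' | h' <;> simp [h, h']
  have hYC : C ≤ Y1 := by
    have : 0 ≤ ev w (fun x => y x - pq x * y x) := key _ fun x => by
      rcases hpq x with h | h <;> rcases hy x with h' | h' <;> simp [h, h']
    have heq : ev w (fun x => y x - pq x * y x) = Y1 - C := by
      rw [hY1, hC, ev, ev, ev, ← Finset.sum_sub_distrib]
      exact Finset.sum_congr rfl fun x _ => by ring
    linarith [heq ▸ this]
  have hAY : A ≤ Y1 := by
    have : 0 ≤ ev w (fun x => y x - ps x * y x) := key _ fun x => by
      rcases hps x with h | h <;> rcases hy x with h' | h' <;> simp [h, h']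
    have heq : ev w (fun x => y x - ps x * y x) = Y1 - A := by
      rw [hY1, hA, ev, ev, ev, ← Finset.sum_sub_distrib]
      exact Finset.sum_congr rfl fun x _ => by ring
    linarith [heq ▸ this]
  have hE1Y : E1 ≤ Y1 := by
    have : 0 ≤ ev w (fun x => y x - ps x * pq x * y x) := key _ fun x => by
      rcases hps x with h | h <;> rcases hpq x with h'' | h'' <;> rcases hy x with h' | h' <;>
        simp [h, h', h'']
    have heq : ev w (fun x => y x - ps x * pq x * y x) = Y1 - E1 := by
      rw [hY1, hE1, ev, ev, ev, ← Finset.sum_sub_distrib]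
      exact Finset.sum_congr rfl fun x _ => by ring
    linarith [heq ▸ this]
  have hAnn : 0 ≤ A := key _ fun x => by
    rcases hps x with h | h <;> rcases hy x with h' | h' <;> simp [h, h']
  have hCnn : 0 ≤ C := key _ fun x => by
    rcases hpq x with h | h <;> rcases hy x with h' | h' <;> simp [h, h']
  have hE1nn : 0 ≤ E1 := key _ fun x => by
    rcases hps x with h | h <;> rcases hpq x with h'' | h'' <;> rcases hy x with h' | h' <;>
      simp [h, h', h'']
  -- key inequality X := A*Y0 - E1*Y0 - B*Y1 + B*C ≥ 0
  have hX : 0 ≤ A * Y0 - E1 * Y0 - B * Y1 + B * C := by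
    have hYnn : 0 ≤ Y1 := hY1 ▸ key y fun x => by rcases hy x with h | h <;> simp [h]
    rcases eq_or_lt_of_le hYnn with hz | hz
    · have hY1z : Y1 = 0 := hz.symm
      have hA0 : A = 0 := le_antisymm (hY1z ▸ hAY) hAnn
      have hE10 : E1 = 0 := le_antisymm (hY1z ▸ hE1Y) hE1nn
      have hC0 : C = 0 := le_antisymm (hY1z ▸ hYC) hCnn
      rw [hA0, hE10, hC0, hY1z]
      norm_num
    · nlinarith [mul_nonneg (sub_nonneg.2 hrs) (sub_nonneg.2 hYC), hz, hci1]
  -- conclude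
  rw [div_le_div_iff₀ hy0 hq0]
  nlinarith [hci0, hX, hsum, hQeq, hSeq]
end

section
/- Under conditional independence of p_s and p_q given the label y and the no-worse-than-random assumption, the fraction of false positives satisfies E[p_s p_q (1-y)] ≤ E[p_s | p_q=0] · E[p_q | p_s=0] =: D, and consequently the fraction of true positives satisfies E[p_s p_q y] ≥ E[p_s p_q] − D. -/
/-!
Given `y`, `p_q` is independent of `p_s`, so `P(p_s = 1 | p_q = 0)` is a mixture of
`P(p_s = 1 | y = 1)` and `P(p_s = 1 | y = 0)`; by the no-worse-than-random assumption it is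
therefore at least `P(p_s = 1 | y = 0)`, and symmetrically
`P(p_q = 1 | p_s = 0) ≥ P(p_q = 1 | y = 0)`. Independence given `y = 0` then bounds the false
positives: `E[p_s p_q (1 - y)] = P(y = 0) P(p_s = 1 | y = 0) P(p_q = 1 | y = 0) ≤ D`.
The true-positive bound follows from `E[p_s p_q] = E[p_s p_q y] + E[p_s p_q (1 - y)]`.
-/

open Finset

open Matrix

theorem nonneg_and_le_one_of_forall_eq_zero_or_one {Ω : Type*} {f : Ω → ℝ}
    (hf : ∀ x, f x = 0 ∨ f x = 1) : 0 ≤ f ∧ f ≤ 1 := by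
  refine ⟨fun x => ?_, fun x => ?_⟩ <;> rcases hf x with h | h <;> simp [h]

namespace ev

variable {Ω : Type*} [Fintype Ω] {w : Ω → ℝ}

theorem add (w f g : Ω → ℝ) : ev w (f + g) = ev w f + ev w g := dotProduct_add w f g

theorem sub (w f g : Ω → ℝ) : ev w (f - g) = ev w f - ev w g := dotProduct_sub w f g

theorem one (hw1 : ∑ x, w x = 1) : ev w 1 = 1 := (dotProduct_one w).trans hw1

theorem nonneg (hw : 0 ≤ w) {f : Ω → ℝ} (hf : 0 ≤ f) : 0 ≤ ev w f :=
  dotProduct_nonneg_of_nonneg hw hf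

theorem mono (hw : 0 ≤ w) {f g : Ω → ℝ} (hfg : f ≤ g) : ev w f ≤ ev w g :=
  dotProduct_le_dotProduct_of_nonneg_left hfg hw

end ev

section

variable {Ω : Type*} [Fintype Ω]

/-- `P(s, t | y) = P(s | y) P(t | y)`, cross-multiplied so that it stays meaningful when
`P(y) = 0`. -/
def CondIndep (w s t y : Ω → ℝ) : Prop :=
  ev w (s * t * y) * ev w y = ev w (s * y) * ev w (t * y)

theorem CondIndep.symm {w s t y : Ω → ℝ} (h : CondIndep w s t y) : CondIndep w t s y := by
  unfold CondIndep at *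
  rw [mul_comm t s, h, mul_comm]

theorem CondIndep.one_sub_right {w s t y : Ω → ℝ} (h : CondIndep w s t y) :
    CondIndep w s (1 - t) y := by
  unfold CondIndep at *
  rw [show s * (1 - t) * y = s * y - s * t * y by ring, show (1 - t) * y = y - t * y by ring,
    ev.sub, ev.sub]
  linear_combination -h

/-- Cross-multiplied form of `P(s | y = 0) ≤ P(s | t)`: given `y`, `t` is independent of `s`, so
`P(s | t)` is a mixture of `P(s | y = 1)` and `P(s | y = 0)`, the former being the larger. -/
theorem ev_mul_ev_le_of_condIndep {w s t y : Ω → ℝ} (hw : 0 ≤ w) (hs : 0 ≤ s) (ht₀ : 0 ≤ t)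
    (ht₁ : t ≤ 1) (hy₀ : 0 ≤ y) (hy₁ : y ≤ 1)
    (h₁ : CondIndep w s t y) (h₀ : CondIndep w s t (1 - y))
    (hr : ev w (s * (1 - y)) * ev w y ≤ ev w (s * y) * ev w (1 - y)) :
    ev w (s * (1 - y)) * ev w t ≤ ev w (s * t) * ev w (1 - y) := by
  have split_t : ev w t = ev w (t * y) + ev w (t * (1 - y)) := by
    rw [← ev.add]; congr 1; ring
  have split_st : ev w (s * t) = ev w (s * t * y) + ev w (s * t * (1 - y)) := by
    rw [← ev.add]; congr 1; ring
  have hty : ev w (t * y) ≤ ev w y :=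
    ev.mono hw fun x => mul_le_of_le_one_left (hy₀ x) (ht₁ x)
  have hty₀ : 0 ≤ ev w (t * y) := ev.nonneg hw (mul_nonneg ht₀ hy₀)
  have hsty₀ : 0 ≤ ev w (s * t * y) := ev.nonneg hw (mul_nonneg (mul_nonneg hs ht₀) hy₀)
  have hn₀ : 0 ≤ ev w (1 - y) := ev.nonneg hw (sub_nonneg.mpr hy₁)
  suffices mixture : ev w (s * (1 - y)) * ev w (t * y) ≤ ev w (s * t * y) * ev w (1 - y) by
    rw [split_t, split_st]
    unfold CondIndep at h₀
    linear_combination mixture - h₀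
  rcases (ev.nonneg hw hy₀).eq_or_lt with hn₁ | hn₁
  · rw [le_antisymm (hn₁ ▸ hty) hty₀, mul_zero]
    exact mul_nonneg hsty₀ hn₀
  · refine le_of_mul_le_mul_right ?_ hn₁
    unfold CondIndep at h₁
    linear_combination mul_le_mul_of_nonneg_right hr hty₀ - ev w (1 - y) * h₁

theorem ev_mul_mul_le_of_condIndep {w s q y : Ω → ℝ} (hw : 0 ≤ w) (hw1 : ∑ x, w x = 1)
    (hs₀ : 0 ≤ s) (hs₁ : s ≤ 1) (hq₀ : 0 ≤ q) (hq₁ : q ≤ 1) (hy₀ : 0 ≤ y) (hy₁ : y ≤ 1)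
    (h₁ : CondIndep w s q y) (h₀ : CondIndep w s q (1 - y))
    (hrs : ev w (s * (1 - y)) * ev w y ≤ ev w (s * y) * ev w (1 - y))
    (hrq : ev w (q * (1 - y)) * ev w y ≤ ev w (q * y) * ev w (1 - y)) :
    ev w (s * q * (1 - y)) * (ev w (1 - q) * ev w (1 - s))
      ≤ ev w (s * (1 - q)) * ev w (q * (1 - s)) := by
  have hs_given_q : ev w (s * (1 - y)) * ev w (1 - q) ≤ ev w (s * (1 - q)) * ev w (1 - y) :=
    ev_mul_ev_le_of_condIndep hw hs₀ (sub_nonneg.mpr hq₁) (sub_le_self 1 hq₀) hy₀ hy₁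
      h₁.one_sub_right h₀.one_sub_right hrs
  have hq_given_s : ev w (q * (1 - y)) * ev w (1 - s) ≤ ev w (q * (1 - s)) * ev w (1 - y) :=
    ev_mul_ev_le_of_condIndep hw hq₀ (sub_nonneg.mpr hs₁) (sub_le_self 1 hs₀) hy₀ hy₁
      h₁.symm.one_sub_right h₀.symm.one_sub_right hrq
  have hA : 0 ≤ ev w (s * (1 - q)) := ev.nonneg hw (mul_nonneg hs₀ (sub_nonneg.mpr hq₁))
  have hB : 0 ≤ ev w (q * (1 - s)) := ev.nonneg hw (mul_nonneg hq₀ (sub_nonneg.mpr hs₁))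
  have hn₀ : ev w (1 - y) ≤ 1 := by
    rw [ev.sub, ev.one hw1]
    linarith [ev.nonneg hw hy₀]
  have hfp₀ : 0 ≤ ev w (s * q * (1 - y)) :=
    ev.nonneg hw (mul_nonneg (mul_nonneg hs₀ hq₀) (sub_nonneg.mpr hy₁))
  have hfp : ev w (s * q * (1 - y)) ≤ ev w (1 - y) := ev.mono hw fun x =>
    mul_le_of_le_one_left (sub_nonneg.mpr (hy₁ x)) (mul_le_one₀ (hs₁ x) (hq₀ x) (hq₁ x))
  rcases (ev.nonneg hw (sub_nonneg.mpr hy₁)).eq_or_lt with hn | hn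
  · rw [le_antisymm (hn ▸ hfp) hfp₀, zero_mul]
    exact mul_nonneg hA hB
  refine le_of_mul_le_mul_right ?_ hn
  unfold CondIndep at h₀
  calc ev w (s * q * (1 - y)) * (ev w (1 - q) * ev w (1 - s)) * ev w (1 - y)
      = (ev w (s * (1 - y)) * ev w (1 - q)) * (ev w (q * (1 - y)) * ev w (1 - s)) := by
        linear_combination (ev w (1 - q) * ev w (1 - s)) * h₀
    _ ≤ (ev w (s * (1 - q)) * ev w (1 - y)) * (ev w (q * (1 - s)) * ev w (1 - y)) :=
        mul_le_mul hs_given_q hq_given_s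
          (mul_nonneg (ev.nonneg hw (mul_nonneg hq₀ (sub_nonneg.mpr hy₁)))
            (ev.nonneg hw (sub_nonneg.mpr hs₁)))
          (mul_nonneg hA hn.le)
    _ = ev w (s * (1 - q)) * ev w (q * (1 - s)) * ev w (1 - y) * ev w (1 - y) := by ring
    _ ≤ ev w (s * (1 - q)) * ev w (q * (1 - s)) * ev w (1 - y) :=
        mul_le_of_le_one_right (mul_nonneg (mul_nonneg hA hB) hn.le) hn₀

end

/-- Under conditional independence of binary `p_s`, `p_q` given the binary label `y` and
the no-worse-than-random assumption, the false-positive fraction satisfies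
`E[p_s p_q (1-y)] ≤ D := E[p_s | p_q=0] · E[p_q | p_s=0]`, and consequently the true-positive
fraction satisfies `E[p_s p_q y] ≥ E[p_s p_q] − D`. -/
theorem stmt1 {Ω : Type*} [Fintype Ω] (w y ps pq : Ω → ℝ)
    (hw : ∀ x, 0 ≤ w x) (hw1 : ∑ x, w x = 1)
    (hy : ∀ x, y x = 0 ∨ y x = 1)
    (hps : ∀ x, ps x = 0 ∨ ps x = 1)
    (hpq : ∀ x, pq x = 0 ∨ pq x = 1)
    -- conditional independence of p_s and p_q given y = 1 and given y = 0
    (hci1 : ev w (fun x => ps x * pq x * y x) * ev w y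
      = ev w (fun x => ps x * y x) * ev w (fun x => pq x * y x))
    (hci0 : ev w (fun x => ps x * pq x * (1 - y x)) * ev w (fun x => 1 - y x)
      = ev w (fun x => ps x * (1 - y x)) * ev w (fun x => pq x * (1 - y x)))
    -- no worse than random (cross-multiplied conditional probabilities)
    (hrs : ev w (fun x => ps x * (1 - y x)) * ev w y
      ≤ ev w (fun x => ps x * y x) * ev w (fun x => 1 - y x))
    (hrq : ev w (fun x => pq x * (1 - y x)) * ev w y
      ≤ ev w (fun x => pq x * y x) * ev w (fun x => 1 - y x))
    -- P(p_q = 0) > 0 and P(p_s = 0) > 0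
    (hq0 : 0 < ev w (fun x => 1 - pq x))
    (hs0 : 0 < ev w (fun x => 1 - ps x)) :
    ev w (fun x => ps x * pq x * (1 - y x))
      ≤ (ev w (fun x => ps x * (1 - pq x)) / ev w (fun x => 1 - pq x))
        * (ev w (fun x => pq x * (1 - ps x)) / ev w (fun x => 1 - ps x))
    ∧ ev w (fun x => ps x * pq x * y x)
      ≥ ev w (fun x => ps x * pq x)
        - (ev w (fun x => ps x * (1 - pq x)) / ev w (fun x => 1 - pq x))
          * (ev w (fun x => pq x * (1 - ps x)) / ev w (fun x => 1 - ps x)) := by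
  obtain ⟨hy₀, hy₁⟩ := nonneg_and_le_one_of_forall_eq_zero_or_one hy
  obtain ⟨hs₀, hs₁⟩ := nonneg_and_le_one_of_forall_eq_zero_or_one hps
  obtain ⟨hq₀, hq₁⟩ := nonneg_and_le_one_of_forall_eq_zero_or_one hpq
  have false_pos : ev w (fun x => ps x * pq x * (1 - y x))
      ≤ (ev w (fun x => ps x * (1 - pq x)) / ev w (fun x => 1 - pq x))
        * (ev w (fun x => pq x * (1 - ps x)) / ev w (fun x => 1 - ps x)) := by
    rw [div_mul_div_comm, le_div_iff₀ (mul_pos hq0 hs0)]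
    exact ev_mul_mul_le_of_condIndep hw hw1 hs₀ hs₁ hq₀ hq₁ hy₀ hy₁ hci1 hci0 hrs hrq
  have split : ev w (fun x => ps x * pq x)
      = ev w (fun x => ps x * pq x * y x) + ev w (fun x => ps x * pq x * (1 - y x)) := by
    rw [← ev.add]
    congr 1
    funext x
    simp only [Pi.add_apply]
    ring
  exact ⟨false_pos, by linarith⟩
end

section
/- If the models are no worse than random in the sense that E[p_s | p_q=1] ≥ E[p_s | p_q=0] and E[p_q | p_s=1] ≥ E[p_q | p_s=0], then E[p_s | p_q=0]·E[p_q | p_s=0] ≤ E[p_s]·E[p_q], i.e., the disagreement-based false-positive estimate D is at most the naive estimate D_naive. -/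
open Finset

/-- If `E[p_s | p_q=1] ≥ E[p_s | p_q=0]` and `E[p_q | p_s=1] ≥ E[p_q | p_s=0]` for binary
`p_s`, `p_q`, then the disagreement-based false-positive estimate
`D = E[p_s | p_q=0] · E[p_q | p_s=0]` is at most the naive estimate
`D_naive = E[p_s] · E[p_q]`. -/
theorem stmt2 {Ω : Type*} [Fintype Ω] (w ps pq : Ω → ℝ)
    (hw : ∀ x, 0 ≤ w x) (hw1 : ∑ x, w x = 1)
    (hps : ∀ x, ps x = 0 ∨ ps x = 1)
    (hpq : ∀ x, pq x = 0 ∨ pq x = 1)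
    (hq1 : 0 < ev w pq) (hq0 : 0 < ev w (fun x => 1 - pq x))
    (hs1 : 0 < ev w ps) (hs0 : 0 < ev w (fun x => 1 - ps x))
    -- no worse than random: E[p_s | p_q=1] ≥ E[p_s | p_q=0]
    (hrs : ev w (fun x => ps x * (1 - pq x)) / ev w (fun x => 1 - pq x)
      ≤ ev w (fun x => ps x * pq x) / ev w pq)
    -- and E[p_q | p_s=1] ≥ E[p_q | p_s=0]
    (hrq : ev w (fun x => pq x * (1 - ps x)) / ev w (fun x => 1 - ps x)
      ≤ ev w (fun x => ps x * pq x) / ev w ps) :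
    (ev w (fun x => ps x * (1 - pq x)) / ev w (fun x => 1 - pq x))
      * (ev w (fun x => pq x * (1 - ps x)) / ev w (fun x => 1 - ps x))
    ≤ ev w ps * ev w pq := by
  set a := ev w (fun x => ps x * (1 - pq x)) with ha
  set b := ev w (fun x => pq x * (1 - ps x)) with hb
  set c := ev w (fun x => ps x * pq x) with hc
  set s := ev w ps with hs
  set q := ev w pq with hq
  have hnn : ∀ x, 0 ≤ ps x := fun x => by rcases hps x with h | h <;> simp [h]
  have hnnq : ∀ x, 0 ≤ pq x := fun x => by rcases hpq x with h | h <;> simp [h]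
  have hle1 : ∀ x, ps x ≤ 1 := fun x => by rcases hps x with h | h <;> simp [h]
  have hle1q : ∀ x, pq x ≤ 1 := fun x => by rcases hpq x with h | h <;> simp [h]
  have hanon : 0 ≤ a := Finset.sum_nonneg fun x _ =>
    mul_nonneg (hw x) (mul_nonneg (hnn x) (by linarith [hle1q x]))
  have hbnon : 0 ≤ b := Finset.sum_nonneg fun x _ =>
    mul_nonneg (hw x) (mul_nonneg (hnnq x) (by linarith [hle1 x]))
  have hsac : s = a + c := by
    rw [hs, ha, hc]
    unfold ev
    rw [← Finset.sum_add_distrib]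
    congr 1; funext x; ring
  have hqbc : q = b + c := by
    rw [hq, hb, hc]
    unfold ev
    rw [← Finset.sum_add_distrib]
    congr 1; funext x; ring
  have hq0' : ev w (fun x => 1 - pq x) = 1 - q := by
    rw [hq]; unfold ev
    rw [Finset.sum_congr rfl (fun x _ => by ring :
      ∀ x ∈ univ, w x * (1 - pq x) = w x - w x * pq x), Finset.sum_sub_distrib, hw1]
  have hs0' : ev w (fun x => 1 - ps x) = 1 - s := by
    rw [hs]; unfold ev
    rw [Finset.sum_congr rfl (fun x _ => by ring :
      ∀ x ∈ univ, w x * (1 - ps x) = w x - w x * ps x), Finset.sum_sub_distrib, hw1]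
  rw [hq0'] at hrs hq0 ⊢
  rw [hs0'] at hrq hs0 ⊢
  -- from hrs : a/(1-q) ≤ c/q get a*q ≤ c*(1-q)
  have h1 : a * q ≤ c * (1 - q) := (div_le_div_iff₀ hq0 hq1).mp hrs
  have h2 : b * s ≤ c * (1 - s) := (div_le_div_iff₀ hs0 hs1).mp hrq
  have key1 : a / (1 - q) ≤ s := by
    rw [div_le_iff₀ hq0]
    nlinarith [hsac]
  have key2 : b / (1 - s) ≤ q := by
    rw [div_le_iff₀ hs0]
    nlinarith [hqbc]
  have hq0'' : 0 ≤ q := le_of_lt hq1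
  exact mul_le_mul key1 key2 (div_nonneg hbnon (le_of_lt hs0)) (by linarith [div_nonneg hanon (le_of_lt hq0), key1] : 0 ≤ s)
end

section
/- For binary random variables p_s, p_q ∈ {0,1} with P(p_s=1)=μ_s, P(p_q=1)=μ_q, P(p_s=1, p_q=1)=μ_sq, the unsupervised F-beta estimate F̂_β = (1+β²)·(μ_sq − D)/(μ_sq + αβ²) with D = ((μ_s−μ_sq)(μ_q−μ_sq))/((1−μ_q)(1−μ_s)) is a lower bound on the supervised F_β = (1+β²)·(TP)/(μ_sq + αβ²) where TP = E[p_s p_q y] and α = P(y=1), assuming conditional independence given y and no-worse-than-random models. -/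
open Finset

lemma key (α a b c d T F : ℝ)
    (hT0 : 0 ≤ T) (hTa : T ≤ a) (hTb : T ≤ b)
    (hF0 : 0 ≤ F) (hFc : F ≤ c) (hFd : F ≤ d)
    (ha0 : 0 ≤ a) (hb0 : 0 ≤ b) (hc0 : 0 ≤ c) (hd0 : 0 ≤ d)
    (haα : a ≤ α) (hbα : b ≤ α) (hcα : c ≤ 1 - α) (hdα : d ≤ 1 - α)
    (hα0 : 0 ≤ α) (hα1 : α ≤ 1)
    (h1 : T * α = a * b) (h0 : F * (1 - α) = c * d)
    (hrs : c * α ≤ a * (1 - α)) (hrq : d * α ≤ b * (1 - α)) :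
    F * (1 - b - d) * (1 - a - c) ≤ (a + c - T - F) * (b + d - T - F) := by
  rcases eq_or_lt_of_le hα0 with h|hα0'
  · have hα : α = 0 := h.symm
    subst hα
    have ha : a = 0 := le_antisymm (by linarith) ha0
    have hb : b = 0 := le_antisymm (by linarith) hb0
    have hT : T = 0 := le_antisymm (by linarith) hT0
    have hF : F = c * d := by linarith [h0]
    subst ha hb hT hF
    nlinarith [sq_nonneg (c - d), sq_nonneg (c*d)]
  rcases eq_or_lt_of_le hα1 with h|hα1'
  · subst h
    have hc : c = 0 := le_antisymm (by linarith) hc0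
    have hd : d = 0 := le_antisymm (by linarith) hd0
    have hF : F = 0 := le_antisymm (by linarith) hF0
    have hT : T = a * b := by linarith [h1]
    subst hc hd hF hT
    nlinarith [mul_nonneg (mul_nonneg ha0 hb0)
      (mul_nonneg (by linarith : (0:ℝ) ≤ 1 - a) (by linarith : (0:ℝ) ≤ 1 - b))]
  set t : ℝ := 1 - α with ht_def
  have ht : 0 < t := by rw [ht_def]; linarith
  have hT : T = a * b / α := by
    rw [eq_div_iff (ne_of_gt hα0')]; exact h1
  have hF : F = c * d / t := by
    rw [eq_div_iff (ne_of_gt ht)]; exact h0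
  have hαa : (0:ℝ) ≤ α - a := by linarith
  have hαb : (0:ℝ) ≤ α - b := by linarith
  have htc : (0:ℝ) ≤ t - c := by rw [ht_def]; linarith
  have htd : (0:ℝ) ≤ t - d := by rw [ht_def]; linarith
  have h4a : 0 ≤ a * b * t - α ^ 2 * (c * d) := by
    have hm : (c * α) * (d * α) ≤ (a * t) * (b * t) :=
      mul_le_mul hrs hrq (mul_nonneg hd0 hα0) (mul_nonneg ha0 ht.le)
    nlinarith [mul_nonneg (mul_nonneg (mul_nonneg ha0 hb0) ht.le) hα0]
  have h4b : 0 ≤ a - α * c := by nlinarith [mul_nonneg ha0 hα0]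
  have h4c : 0 ≤ b - α * d := by nlinarith [mul_nonneg hb0 hα0]
  have hΔ : 0 ≤ t * (α - a) * (α - b) * (a * b * t - α ^ 2 * (c * d))
      + α * t * (α - b) * (t - c) * d * (a - α * c)
      + α * t * (α - a) * (t - d) * c * (b - α * d)
      + α ^ 3 * (c * d) * ((t - c) * (t - d)) := by
    have e1 := mul_nonneg (mul_nonneg (mul_nonneg ht.le hαa) hαb) h4a
    have e2 := mul_nonneg (mul_nonneg (mul_nonneg (mul_nonneg (mul_nonneg hα0 ht.le) hαb) htc) hd0) h4b
    have e3 := mul_nonneg (mul_nonneg (mul_nonneg (mul_nonneg (mul_nonneg hα0 ht.le) hαa) htd) hc0) h4c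
    have e4 := mul_nonneg (mul_nonneg (pow_nonneg hα0 3) (mul_nonneg hc0 hd0)) (mul_nonneg htc htd)
    exact add_nonneg (add_nonneg (add_nonneg e1 e2) e3) e4
  have hid : (a + c - T - F) * (b + d - T - F) - F * (1 - b - d) * (1 - a - c)
      = (t * (α - a) * (α - b) * (a * b * t - α ^ 2 * (c * d))
      + α * t * (α - b) * (t - c) * d * (a - α * c)
      + α * t * (α - a) * (t - d) * c * (b - α * d)
      + α ^ 3 * (c * d) * ((t - c) * (t - d))) / (α ^ 2 * t ^ 2) := by
    rw [hT, hF, ht_def]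
    field_simp
    ring
  have hdiv : 0 ≤ (t * (α - a) * (α - b) * (a * b * t - α ^ 2 * (c * d))
      + α * t * (α - b) * (t - c) * d * (a - α * c)
      + α * t * (α - a) * (t - d) * c * (b - α * d)
      + α ^ 3 * (c * d) * ((t - c) * (t - d))) / (α ^ 2 * t ^ 2) :=
    div_nonneg hΔ (by positivity)
  linarith [hid ▸ hdiv]

lemma ev_mono {Ω : Type*} [Fintype Ω] {w f g : Ω → ℝ} (hw : ∀ x, 0 ≤ w x)
    (h : ∀ x, f x ≤ g x) : ev w f ≤ ev w g :=
  Finset.sum_le_sum fun x _ => mul_le_mul_of_nonneg_left (h x) (hw x)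

lemma ev_nonneg {Ω : Type*} [Fintype Ω] {w f : Ω → ℝ} (hw : ∀ x, 0 ≤ w x)
    (h : ∀ x, 0 ≤ f x) : 0 ≤ ev w f :=
  Finset.sum_nonneg fun x _ => mul_nonneg (hw x) (h x)

lemma ev_split {Ω : Type*} [Fintype Ω] (w f y : Ω → ℝ) :
    ev w f = ev w (fun x => f x * y x) + ev w (fun x => f x * (1 - y x)) := by
  unfold ev
  rw [← Finset.sum_add_distrib]
  exact Finset.sum_congr rfl fun x _ => by ring

/-- The unsupervised estimate `F̂_β = (1+β²)(μ_sq − D)/(μ_sq + αβ²)` with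
`D = ((μ_s−μ_sq)(μ_q−μ_sq))/((1−μ_q)(1−μ_s))` is a lower bound for
the supervised `F_β = (1+β²)·TP/(μ_sq + αβ²)`, `TP = E[p_s p_q y]`, `α = P(y=1)`,
under conditional independence given `y` and no-worse-than-random models. -/
theorem stmt4 {Ω : Type*} [Fintype Ω] (w y ps pq : Ω → ℝ) (β : ℝ)
    (hw : ∀ x, 0 ≤ w x) (hw1 : ∑ x, w x = 1)
    (hy : ∀ x, y x = 0 ∨ y x = 1)
    (hps : ∀ x, ps x = 0 ∨ ps x = 1)
    (hpq : ∀ x, pq x = 0 ∨ pq x = 1)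
    (hμs0 : 0 < ev w ps) (hμs1 : ev w ps < 1)
    (hμq0 : 0 < ev w pq) (hμq1 : ev w pq < 1)
    (hμsq : 0 < ev w (fun x => ps x * pq x))
    -- conditional independence of p_s and p_q given y = 1 and given y = 0
    (hci1 : ev w (fun x => ps x * pq x * y x) * ev w y
      = ev w (fun x => ps x * y x) * ev w (fun x => pq x * y x))
    (hci0 : ev w (fun x => ps x * pq x * (1 - y x)) * ev w (fun x => 1 - y x)
      = ev w (fun x => ps x * (1 - y x)) * ev w (fun x => pq x * (1 - y x)))
    -- no worse than random (cross-multiplied conditional probabilities)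
    (hrs : ev w (fun x => ps x * (1 - y x)) * ev w y
      ≤ ev w (fun x => ps x * y x) * ev w (fun x => 1 - y x))
    (hrq : ev w (fun x => pq x * (1 - y x)) * ev w y
      ≤ ev w (fun x => pq x * y x) * ev w (fun x => 1 - y x))
    (hβ : 0 ≤ β)
    (hden : 0 < ev w (fun x => ps x * pq x) + ev w y * β ^ 2) :
    (1 + β ^ 2)
        * (ev w (fun x => ps x * pq x)
            - ((ev w ps - ev w (fun x => ps x * pq x))
                * (ev w pq - ev w (fun x => ps x * pq x)))
              / ((1 - ev w pq) * (1 - ev w ps)))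
        / (ev w (fun x => ps x * pq x) + ev w y * β ^ 2)
      ≤ (1 + β ^ 2) * ev w (fun x => ps x * pq x * y x)
        / (ev w (fun x => ps x * pq x) + ev w y * β ^ 2) := by
  set α := ev w y with hα_def
  set a := ev w (fun x => ps x * y x) with ha_def
  set b := ev w (fun x => pq x * y x) with hb_def
  set c := ev w (fun x => ps x * (1 - y x)) with hc_def
  set d := ev w (fun x => pq x * (1 - y x)) with hd_def
  set T := ev w (fun x => ps x * pq x * y x) with hT_def
  set F := ev w (fun x => ps x * pq x * (1 - y x)) with hF_def
  -- values of y, ps, pq are in {0,1}; helper pointwise facts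
  have hy0 : ∀ x, 0 ≤ y x := fun x => by rcases hy x with h|h <;> rw [h] <;> norm_num
  have hy1 : ∀ x, y x ≤ 1 := fun x => by rcases hy x with h|h <;> rw [h] <;> norm_num
  have hps0 : ∀ x, 0 ≤ ps x := fun x => by rcases hps x with h|h <;> rw [h] <;> norm_num
  have hps1 : ∀ x, ps x ≤ 1 := fun x => by rcases hps x with h|h <;> rw [h] <;> norm_num
  have hpq0 : ∀ x, 0 ≤ pq x := fun x => by rcases hpq x with h|h <;> rw [h] <;> norm_num
  have hpq1 : ∀ x, pq x ≤ 1 := fun x => by rcases hpq x with h|h <;> rw [h] <;> norm_num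
  -- splits
  have hμs : ev w ps = a + c := ev_split w ps y
  have hμq : ev w pq = b + d := ev_split w pq y
  have hμsq' : ev w (fun x => ps x * pq x) = T + F := ev_split w (fun x => ps x * pq x) y
  have hone : ev w (fun _ : Ω => (1:ℝ)) = 1 := by
    unfold ev; simpa using hw1
  have h1y : ev w (fun x => 1 - y x) = 1 - α := by
    have := ev_split w (fun _ : Ω => (1:ℝ)) y
    simp only [one_mul] at this
    rw [hone] at this
    rw [hα_def]
    unfold ev at this ⊢
    linarith
  rw [h1y] at hci0 hrs hrq
  -- bounds
  have hT0 : 0 ≤ T := ev_nonneg hw fun x =>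
    mul_nonneg (mul_nonneg (hps0 x) (hpq0 x)) (hy0 x)
  have hTa : T ≤ a := ev_mono hw fun x => by
    rcases hps x with h1|h1 <;> rcases hpq x with h2|h2 <;> rcases hy x with h3|h3 <;>
      simp [h1, h2, h3]
  have hTb : T ≤ b := ev_mono hw fun x => by
    rcases hps x with h1|h1 <;> rcases hpq x with h2|h2 <;> rcases hy x with h3|h3 <;>
      simp [h1, h2, h3]
  have hF0 : 0 ≤ F := ev_nonneg hw fun x =>
    mul_nonneg (mul_nonneg (hps0 x) (hpq0 x)) (by linarith [hy1 x])
  have hFc : F ≤ c := ev_mono hw fun x => by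
    rcases hps x with h1|h1 <;> rcases hpq x with h2|h2 <;> rcases hy x with h3|h3 <;>
      simp [h1, h2, h3]
  have hFd : F ≤ d := ev_mono hw fun x => by
    rcases hps x with h1|h1 <;> rcases hpq x with h2|h2 <;> rcases hy x with h3|h3 <;>
      simp [h1, h2, h3]
  have ha0 : 0 ≤ a := ev_nonneg hw fun x => mul_nonneg (hps0 x) (hy0 x)
  have hb0 : 0 ≤ b := ev_nonneg hw fun x => mul_nonneg (hpq0 x) (hy0 x)
  have hc0 : 0 ≤ c := ev_nonneg hw fun x => mul_nonneg (hps0 x) (by linarith [hy1 x])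
  have hd0 : 0 ≤ d := ev_nonneg hw fun x => mul_nonneg (hpq0 x) (by linarith [hy1 x])
  have haα : a ≤ α := ev_mono hw fun x => by
    rcases hps x with h1|h1 <;> rcases hy x with h3|h3 <;> simp [h1, h3]
  have hbα : b ≤ α := ev_mono hw fun x => by
    rcases hpq x with h1|h1 <;> rcases hy x with h3|h3 <;> simp [h1, h3]
  have hcα : c ≤ 1 - α := by
    have : c ≤ ev w (fun x => 1 - y x) := ev_mono hw fun x => by
      rcases hps x with h1|h1 <;> rcases hy x with h3|h3 <;> simp [h1, h3]
    linarith [h1y ▸ this]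
  have hdα : d ≤ 1 - α := by
    have : d ≤ ev w (fun x => 1 - y x) := ev_mono hw fun x => by
      rcases hpq x with h1|h1 <;> rcases hy x with h3|h3 <;> simp [h1, h3]
    linarith [h1y ▸ this]
  have hα0 : 0 ≤ α := ev_nonneg hw hy0
  have hα1 : α ≤ 1 := by
    have : α ≤ ev w (fun _ : Ω => (1:ℝ)) := ev_mono hw hy1
    linarith [hone ▸ this]
  -- key inequality
  have hkey := key α a b c d T F hT0 hTa hTb hF0 hFc hFd ha0 hb0 hc0 hd0
    haα hbα hcα hdα hα0 hα1 hci1 hci0 hrs hrq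
  -- assemble
  have hposden : (0:ℝ) < (1 - ev w pq) * (1 - ev w ps) :=
    mul_pos (by linarith) (by linarith)
  have hFD : F ≤ ((ev w ps - ev w (fun x => ps x * pq x))
      * (ev w pq - ev w (fun x => ps x * pq x)))
      / ((1 - ev w pq) * (1 - ev w ps)) := by
    rw [le_div_iff₀ hposden, hμs, hμq, hμsq']
    nlinarith [hkey]
  have hnum : ev w (fun x => ps x * pq x)
      - ((ev w ps - ev w (fun x => ps x * pq x))
          * (ev w pq - ev w (fun x => ps x * pq x)))
        / ((1 - ev w pq) * (1 - ev w ps)) ≤ T := by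
    linarith [hFD, hμsq']
  have h1β : (0:ℝ) ≤ 1 + β ^ 2 := by positivity
  have h2 := mul_le_mul_of_nonneg_left hnum h1β
  first
  | exact div_le_div_of_le_left h2 hden hden
  | exact (div_le_div_iff_of_pos_right hden).mpr h2
  | exact (div_le_div_iff_right hden).mpr h2
  | exact div_le_div_of_nonneg_right h2 hden
  | gcongr
end

section
/- If P(Aᶜ\B\C) ≥ P(Aᶜ\B)·P(Aᶜ\C) (with P(Aᶜ) normalized to fractions c₄ = P(Aᶜ\B\C)/P(Aᶜ), c₄+c₅ = P(Aᶜ\B)/P(Aᶜ), c₄+c₆ = P(Aᶜ\C)/P(Aᶜ)), then P(Aᶜ) ≤ c₄/((c₄+c₅)(c₄+c₆)); consequently, in the second solution group of the noisy-overlap analysis, adding fractional mass d₂ to q(Aᶜ\C) increases the false-positive estimate D at least as much as it increases the joint-event rate μ_sq, so it cannot improve F̂_β. -/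
theorem le_div_of_mul_sq_le_mul {K : Type*} [Field K] [LinearOrder K] [IsStrictOrderedRing K]
    {a b x : K} (ha : 0 < a) (hx : 0 < x) (h : a * x ^ 2 ≤ b * x) : x ≤ b / a := by
  rw [le_div_iff₀ ha]
  refine le_of_mul_le_mul_right ?_ hx
  calc x * a * x = a * x ^ 2 := by ring
    _ ≤ b * x := h

theorem stmt19_general (PAc c4 c5 c6 : ℝ)
    (h6 : 0 ≤ c6)
    (h45p : 0 < c4 + c5) (h46p : 0 < c4 + c6)
    (hP : 0 < PAc)
    (hyp : (c4 + c5) * (c4 + c6) * PAc ^ 2 ≤ c4 * PAc) :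
    PAc ≤ c4 / ((c4 + c5) * (c4 + c6))
    ∧ ∀ d2 : ℝ, 0 ≤ d2 → d2 * c6 * PAc ≤ d2 * c6 * (c4 / ((c4 + c5) * (c4 + c6))) := by
  have hPAc := le_div_of_mul_sq_le_mul (mul_pos h45p h46p) hP hyp
  exact ⟨hPAc, fun d2 hd2 => mul_le_mul_of_nonneg_left hPAc (mul_nonneg hd2 h6)⟩

/-- If `P(Aᶜ\B\C) ≥ P(Aᶜ\B)·P(Aᶜ\C)`, written via normalized fractions
`c₄ = P(Aᶜ\B\C)/P(Aᶜ)`, `c₄+c₅ = P(Aᶜ\B)/P(Aᶜ)`, `c₄+c₆ = P(Aᶜ\C)/P(Aᶜ)` as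
`c₄·P(Aᶜ) ≥ (c₄+c₅)(c₄+c₆)·P(Aᶜ)²`, then `P(Aᶜ) ≤ c₄/((c₄+c₅)(c₄+c₆))`; consequently
adding fractional mass `d₂` increases the false-positive estimate at least as much as the
joint-event rate: `d₂c₆·P(Aᶜ) ≤ d₂c₆·c₄/((c₄+c₅)(c₄+c₆))` for all `d₂ ≥ 0`. -/
theorem stmt19 (PAc c4 c5 c6 : ℝ)
    (h4 : 0 ≤ c4) (h5 : 0 ≤ c5) (h6 : 0 ≤ c6)
    (h45 : c4 + c5 ≤ 1) (h46 : c4 + c6 ≤ 1)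
    (h45p : 0 < c4 + c5) (h46p : 0 < c4 + c6)
    (hP : 0 < PAc)
    (hyp : (c4 + c5) * (c4 + c6) * PAc ^ 2 ≤ c4 * PAc) :
    PAc ≤ c4 / ((c4 + c5) * (c4 + c6))
    ∧ ∀ d2 : ℝ, 0 ≤ d2 → d2 * c6 * PAc ≤ d2 * c6 * (c4 / ((c4 + c5) * (c4 + c6))) :=
  stmt19_general PAc c4 c5 c6 h6 h45p h46p hP hyp
end
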